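/- Let η: ℝ → ℝ satisfy |η(u)| ≤ λ*·|u| with 0 < λ* < 1, and let β_ξ be the convex regularization of the absolute value. Then for all u ∈ ℝ and τ ∈ [0,1]: η(u)²·β_ξ''(u + τη(u)) ≤ C·(λ*)²(1+λ*)²/(1-τλ*)²·β_ξ(u), where C is a constant such that r²β_ξ''(r) ≤ C·β_ξ(r) for all r. In particular the chain |u| ≤ |u+τη(u)|/(1-τλ*) and β_ξ(α r) ≤ α²β_ξ(r) for α ≥ 1 hold. -/
import Mathlib


/-- For a jump coefficient `η` with `|η(u)| ≤ λ*|u|`, `0 < λ* < 1`, and a convex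
regularized absolute value `β_ξ` with `r²β_ξ''(r) ≤ Cβ_ξ(r)` and `β_ξ(αr) ≤ α²β_ξ(r)`
for `α ≥ 1`: `|u| ≤ |u+τη(u)|/(1-τλ*)` and
`η(u)²·β_ξ''(u+τη(u)) ≤ C·(λ*)²(1+λ*)²/(1-τλ*)²·β_ξ(u)` for `τ ∈ [0,1]`. -/
theorem jump_term_bound (lamstar : ℝ) (hls : lamstar ∈ Set.Ioo (0 : ℝ) 1)
    (η : ℝ → ℝ) (hη : ∀ u, |η u| ≤ lamstar * |u|)
    (β : ℝ → ℝ) (hβ : ContDiff ℝ 2 β) (hconv : ConvexOn ℝ Set.univ β)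
    (heven : ∀ r, β (-r) = β r) (h0 : β 0 = 0) (h0' : deriv β 0 = 0)
    (C : ℝ) (hC : 0 < C)
    (hgrowth : ∀ r, r ^ 2 * deriv (deriv β) r ≤ C * β r)
    (hscale : ∀ α : ℝ, 1 ≤ α → ∀ r, β (α * r) ≤ α ^ 2 * β r)
    (u τ : ℝ) (hτ : τ ∈ Set.Icc (0 : ℝ) 1) :
    |u| ≤ |u + τ * η u| / (1 - τ * lamstar) ∧
    η u ^ 2 * deriv (deriv β) (u + τ * η u)
      ≤ C * lamstar ^ 2 * (1 + lamstar) ^ 2 / (1 - τ * lamstar) ^ 2 * β u := by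
  obtain ⟨hl0, hl1⟩ := hls
  obtain ⟨hτ0, hτ1⟩ := hτ
  set v := u + τ * η u with hv
  have hd : 0 < 1 - τ * lamstar := by nlinarith
  -- β is nonneg
  have hβnn : ∀ r, 0 ≤ β r := by
    intro r
    have := hconv.2 (Set.mem_univ r) (Set.mem_univ (-r))
      (by norm_num : (0:ℝ) ≤ 1/2) (by norm_num : (0:ℝ) ≤ 1/2) (by norm_num)
    simp only [smul_eq_mul] at this
    have h2 : (1/2 : ℝ) * r + 1/2 * (-r) = 0 := by ring
    rw [h2, h0, heven r] at this
    linarith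
  -- contraction lemma from convexity and evenness
  have hsc : ∀ s w : ℝ, |s| ≤ 1 → β (s * w) ≤ β w := by
    intro s w hs
    have hβsw : β (s * w) = β (|s| * w) := by
      rcases abs_cases s with ⟨h, _⟩ | ⟨h, _⟩
      · rw [h]
      · rw [h, neg_mul, heven]
    rw [hβsw]
    have h1 : (0:ℝ) ≤ |s| := abs_nonneg s
    have := hconv.2 (Set.mem_univ w) (Set.mem_univ (0:ℝ)) h1
      (by linarith : (0:ℝ) ≤ 1 - |s|) (by ring)
    simp only [smul_eq_mul, mul_zero, add_zero, h0] at this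
    nlinarith [hβnn w]
  -- key abs bound
  have hηu := hη u
  have habs1 : (1 - τ * lamstar) * |u| ≤ |v| := by
    have h1 : |u| ≤ |v| + τ * |η u| := by
      have : |u| = |v - τ * η u| := by rw [hv]; ring_nf
      rw [this]
      calc |v - τ * η u| ≤ |v| + |τ * η u| := abs_sub _ _
        _ = |v| + τ * |η u| := by rw [abs_mul, abs_of_nonneg hτ0]
    nlinarith
  constructor
  · rw [le_div_iff₀ hd]; linarith [habs1]
  · by_cases hu0 : u = 0
    · subst hu0
      have hz : η 0 = 0 := by
        have := hη 0
        simpa using le_antisymm (by simpa using this) (abs_nonneg (η 0))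
      simp [hz, h0]
    · by_cases hb : deriv (deriv β) v ≤ 0
      · have hL : η u ^ 2 * deriv (deriv β) v ≤ 0 :=
          mul_nonpos_of_nonneg_of_nonpos (sq_nonneg _) hb
        have hR : 0 ≤ C * lamstar ^ 2 * (1 + lamstar) ^ 2 / (1 - τ * lamstar) ^ 2 * β u :=
          mul_nonneg (by positivity) (hβnn u)
        linarith
      · push_neg at hb
        have h1 : η u ^ 2 ≤ lamstar ^ 2 * u ^ 2 := by
          nlinarith [abs_nonneg (η u), abs_nonneg u, sq_abs (η u), sq_abs u]
        have h2 : (1 - τ * lamstar) ^ 2 * u ^ 2 ≤ v ^ 2 := by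
          have hh := mul_self_le_mul_self (mul_nonneg hd.le (abs_nonneg u)) habs1
          nlinarith [sq_abs u, sq_abs v]
        have h3 := hgrowth v
        -- β v ≤ (1+λ)² β u
        have hvu : |v| ≤ (1 + lamstar) * |u| := by
          have : |v| ≤ |u| + τ * |η u| := by
            calc |v| ≤ |u| + |τ * η u| := abs_add_le _ _
              _ = |u| + τ * |η u| := by rw [abs_mul, abs_of_nonneg hτ0]
          nlinarith [mul_le_mul_of_nonneg_left hηu hτ0,
            mul_nonneg (mul_nonneg (by linarith : (0:ℝ) ≤ 1 - τ) hl0.le) (abs_nonneg u)]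
        have hu' : (0:ℝ) < |u| := abs_pos.mpr hu0
        set s := v / ((1 + lamstar) * u) with hsdef
        have hden : (1 + lamstar) * u ≠ 0 := by
          intro h
          rcases mul_eq_zero.mp h with h | h
          · linarith
          · exact hu0 h
        have hs : |s| ≤ 1 := by
          rw [hsdef, abs_div, div_le_one (abs_pos.mpr hden)]
          rw [abs_mul, abs_of_pos (by linarith : (0:ℝ) < 1 + lamstar)]
          exact hvu
        have hseq : v / (1 + lamstar) = s * u := by
          rw [hsdef]
          field_simp
        have h4 : β v ≤ (1 + lamstar) ^ 2 * β u := by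
          have hv' : v = (1 + lamstar) * (v / (1 + lamstar)) := by
            field_simp
          calc β v = β ((1 + lamstar) * (v / (1 + lamstar))) := by rw [← hv']
            _ ≤ (1 + lamstar) ^ 2 * β (v / (1 + lamstar)) :=
                hscale _ (by linarith) _
            _ = (1 + lamstar) ^ 2 * β (s * u) := by rw [hseq]
            _ ≤ (1 + lamstar) ^ 2 * β u :=
                mul_le_mul_of_nonneg_left (hsc s u hs) (by positivity)
        rw [div_mul_eq_mul_div, le_div_iff₀ (by positivity : (0:ℝ) < (1 - τ * lamstar) ^ 2)]
        nlinarith [mul_le_mul_of_nonneg_right h1 hb.le,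
          mul_le_mul_of_nonneg_right h2 hb.le,
          mul_le_mul_of_nonneg_left h3 (sq_nonneg lamstar),
          mul_le_mul_of_nonneg_left h4 (mul_nonneg hC.le (sq_nonneg lamstar)),
          sq_nonneg lamstar, hb.le]
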